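/- Let E be a DGEA. The set F of finite elements (f is finite iff e ≤ f and e ∼ f imply e = f) is an order ideal, and the subtraction property holds: if e = e₁ ⊕ e₂, f = f₁ ⊕ f₂ with e, f ∈ F, e ∼ f, and e₁ ∼ f₁, then e₂ ∼ f₂. -/
import Mathlib


universe u

/-- A generalized effect algebra: partial operation encoded by a definedness
relation `perp` together with a total function `op` whose values are only
meaningful when `perp` holds. -/
class GEA (E : Type u) where
  zero : E
  perp : E → E → Prop
  op : E → E → E
  perp_comm : ∀ {e f : E}, perp e f → perp f e
  op_comm : ∀ {e f : E}, perp e f → op e f = op f e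
  assoc_perp₁ : ∀ {d e f : E}, perp e f → perp d (op e f) → perp d e
  assoc_perp₂ : ∀ {d e f : E}, perp e f → perp d (op e f) → perp (op d e) f
  assoc_eq : ∀ {d e f : E}, perp e f → perp d (op e f) →
    op d (op e f) = op (op d e) f
  perp_zero : ∀ e : E, perp e zero
  op_zero : ∀ e : E, op e zero = e
  cancel : ∀ {d e f : E}, perp d e → perp d f → op d e = op d f → e = f
  pos : ∀ {e f : E}, perp e f → op e f = zero → e = zero ∧ f = zero

namespace GEA

variable {E : Type u} [GEA E]

/-- `e ≤ f` iff `e ⊕ d = f` for some `d`. -/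
def le (e f : E) : Prop := ∃ d : E, perp e d ∧ op e d = f

/-- `p` is sharp. -/
def Sharp (p : E) : Prop := ∀ d : E, le d p → perp d p → d = zero

/-- `p` is principal. -/
def Principal (p : E) : Prop :=
  ∀ e f : E, le e p → le f p → perp e f → le (op e f) p

/-- An ideal of a GEA. -/
def Ideal (S : Set E) : Prop :=
  (∀ s t : E, s ∈ S → le t s → t ∈ S) ∧
  (∀ s t : E, s ∈ S → t ∈ S → perp s t → op s t ∈ S)

/-- `E = H ⊕ K` : a direct sum decomposition into two subsets. -/
def DirectSum (H K : Set E) : Prop :=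
  (∀ h k : E, h ∈ H → k ∈ K → perp h k) ∧
  (∀ e : E, ∃! p : E × E,
    p.1 ∈ H ∧ p.2 ∈ K ∧ perp p.1 p.2 ∧ op p.1 p.2 = e)

/-- `FinSum e s x` : `x` is the (well-defined) orthosum of the finite
subfamily of `e` indexed by the finset `s`. -/
inductive FinSum {I : Type} (e : I → E) : Finset I → E → Prop
  | empty : FinSum e ∅ zero
  | cons {s : Finset I} {i : I} {x : E} (h : i ∉ s) :
      FinSum e s x → perp (e i) x → FinSum e (Finset.cons i s h) (op (e i) x)

/-- A family is orthogonal iff all its finite partial orthosums exist. -/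
def OrthoFam {I : Type} (e : I → E) : Prop := ∀ s : Finset I, ∃ x : E, FinSum e s x

/-- `m` is the orthosum of the family `e` : the family is orthogonal and `m`
is the supremum of its finite partial orthosums. -/
def IsOrthosum {I : Type} (e : I → E) (m : E) : Prop :=
  OrthoFam e ∧ (∀ (s : Finset I) (x : E), FinSum e s x → le x m) ∧
  ∀ b : E, (∀ (s : Finset I) (x : E), FinSum e s x → le x b) → le m b

/-- Dedekind orthocompleteness. -/
def DedekindOC (E : Type u) [GEA E] : Prop :=
  ∀ (I : Type) (e : I → E), OrthoFam e →
    (∃ b : E, ∀ (s : Finset I) (x : E), FinSum e s x → le x b) →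
    ∃ m : E, IsOrthosum e m

/-- A Sherstnev–Kalinin congruence on a GEA. -/
structure SKCong (E : Type u) [GEA E] (sim : E → E → Prop) : Prop where
  refl : ∀ e : E, sim e e
  symm : ∀ {e f : E}, sim e f → sim f e
  trans : ∀ {d e f : E}, sim d e → sim e f → sim d f
  sk1 : ∀ {e : E}, sim e zero → e = zero
  sk2 : ∀ {I : Type} (e f : I → E) (se sf : E), IsOrthosum e se →
    IsOrthosum f sf → (∀ i : I, sim (e i) (f i)) → sim se sf
  sk3d : ∀ {p s t : E}, perp s t → sim p (op s t) →
    ∃ e f : E, perp e f ∧ op e f = p ∧ sim e s ∧ sim f t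
  sk3e : ∀ {e f s t : E}, perp e f → perp s t → op e f = op s t →
    ∃ e₁ e₂ f₁ f₂ : E, perp e₁ e₂ ∧ op e₁ e₂ = e ∧ perp f₁ f₂ ∧ op f₁ f₂ = f ∧
      perp e₁ f₁ ∧ sim s (op e₁ f₁) ∧ perp e₂ f₂ ∧ sim t (op e₂ f₂)
  sk4a : ∀ {e f : E}, ¬ perp e f →
    ∃ e₁ f₁ : E, e₁ ≠ zero ∧ f₁ ≠ zero ∧ le e₁ e ∧ le f₁ f ∧ sim e₁ f₁
  sk4b : ∀ {e f : E}, ¬ le e f →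
    ∃ e₁ d₁ : E, e₁ ≠ zero ∧ d₁ ≠ zero ∧ le e₁ e ∧ perp d₁ f ∧ sim e₁ d₁

/-- Subequivalence: `f ≲ e`. -/
def Subeq (sim : E → E → Prop) (f e : E) : Prop :=
  ∃ e₁ : E, le e₁ e ∧ sim f e₁

/-- `e` and `f` are related. -/
def Related (sim : E → E → Prop) (e f : E) : Prop :=
  ∃ e₁ f₁ : E, e₁ ≠ zero ∧ f₁ ≠ zero ∧ le e₁ e ∧ le f₁ f ∧ sim e₁ f₁

/-- A hereditary subset. -/
def Hereditary (sim : E → E → Prop) (H : Set E) : Prop :=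
  ∀ h e : E, h ∈ H → Subeq sim e h → e ∈ H

/-- An exocentral mapping on a GEA. -/
structure Exocentral (π : E → E) : Prop where
  perp_map : ∀ {e f : E}, perp e f → perp (π e) (π f)
  op_map : ∀ {e f : E}, perp e f → π (op e f) = op (π e) (π f)
  idem : ∀ e : E, π (π e) = π e
  dec : ∀ e : E, le (π e) e
  orth : ∀ {e f : E}, π e = e → π f = zero → perp e f

/-- `π'` is the complementary mapping of `π` : `π'e = e ⊖ πe`. -/
def IsComplMap (π π' : E → E) : Prop :=
  ∀ e : E, perp (π e) (π' e) ∧ op (π e) (π' e) = e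

/-- `π` (with complement `π'`) splits the equivalence relation `sim`. -/
def Splits (sim : E → E → Prop) (π π' : E → E) : Prop :=
  ∀ e f : E, e ∈ Set.range π → f ∈ Set.range π' → sim e f →
    e = zero ∧ f = zero

/-- A hull system `(η_e)_{e ∈ E}` on a GEA, where `η e : E → E` is the hull
mapping indexed by `e`. -/
structure HullSystem (E : Type u) [GEA E] (η : E → E → E) : Prop where
  exo : ∀ e : E, Exocentral (η e)
  hs1 : ∀ x : E, η zero x = zero
  hs2 : ∀ e : E, η e e = e
  hs3 : ∀ e f x : E, η (η e f) x = η e (η f x)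
  hs3' : ∀ e f x : E, η e (η f x) = η f (η e x)

/-- A GEX-orthogonal family. -/
def GEXOrtho {I : Type} (e : I → E) : Prop :=
  ∃ π : I → E → E, (∀ i : I, Exocentral (π i)) ∧
    (∀ i j : I, i ≠ j → ∀ x : E, π i (π j x) = zero) ∧
    ∀ i : I, π i (e i) = e i

/-- Central orthocompleteness. -/
def CentrallyOC (E : Type u) [GEA E] : Prop :=
  ∀ (I : Type) (e : I → E), GEXOrtho e →
    (∃ m : E, IsOrthosum e m) ∧
    ∀ f : E, (∀ i : I, perp f (e i)) → ∀ m : E, IsOrthosum e m → perp f m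

/-- A dimension equivalence relation: an SK-congruence satisfying SK4a′. -/
def IsDER (E : Type u) [GEA E] (sim : E → E → Prop) : Prop :=
  SKCong E sim ∧
  ∀ e f : E, ¬ Related sim e f →
    ∃ π π' : E → E, Exocentral π ∧ IsComplMap π π' ∧ Splits sim π π' ∧
      π e = e ∧ π' f = f

/-- `η` is the hull system determined by the hull-determining set `Σ∼(E)` of
exocentral mappings splitting `sim` : each `η e` belongs to `Σ∼(E)` and is the
smallest member of `Σ∼(E)` fixing `e`. -/
def SigmaHull (sim : E → E → Prop) (η : E → E → E) : Prop :=
  (∀ e : E, ∃ π' : E → E, IsComplMap (η e) π' ∧ Splits sim (η e) π') ∧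
  ∀ (e : E) (π π' : E → E), Exocentral π → IsComplMap π π' →
    Splits sim π π' → π e = e →
      (∀ x : E, η e (π x) = η e x) ∧ (∀ x : E, π (η e x) = η e x)

/-- A simple element. -/
def Simple (sim : E → E → Prop) (k : E) : Prop :=
  ∀ e e' : E, perp e e' → op e e' = k → ¬ Related sim e e'

/-- A finite element. -/
def Finite' (sim : E → E → Prop) (f : E) : Prop :=
  ∀ e : E, le e f → sim e f → e = f


section Basic

lemma perp_zero' (e : E) : perp zero e := perp_comm (perp_zero e)

lemma zero_op (e : E) : op zero e = e := by
  rw [op_comm (perp_zero' e), op_zero]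

lemma le_refl' (e : E) : le e e := ⟨zero, perp_zero e, op_zero e⟩

lemma zero_le' (e : E) : le zero e := ⟨e, perp_zero' e, zero_op e⟩

lemma shift {e f c : E} (hef : perp e f) (h : perp (op e f) c) :
    perp f c ∧ perp e (op f c) ∧ op (op e f) c = op e (op f c) := by
  have hfe := perp_comm hef
  have hc : perp c (op f e) := by rw [← op_comm hef]; exact perp_comm h
  have h1 : perp c f := assoc_perp₁ hfe hc
  have h2 : perp (op c f) e := assoc_perp₂ hfe hc
  have h3 : op c (op f e) = op (op c f) e := assoc_eq hfe hc
  have hfc : perp f c := perp_comm h1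
  have hcf : op c f = op f c := op_comm h1
  refine ⟨hfc, ?_, ?_⟩
  · have h4 := perp_comm h2
    rwa [hcf] at h4
  · calc op (op e f) c = op c (op e f) := op_comm h
      _ = op c (op f e) := by rw [op_comm hef]
      _ = op (op c f) e := h3
      _ = op e (op c f) := op_comm h2
      _ = op e (op f c) := by rw [hcf]

lemma assocd {d e f : E} (hef : perp e f) (h : perp d (op e f)) :
    perp d e ∧ perp (op d e) f ∧ op d (op e f) = op (op d e) f :=
  ⟨assoc_perp₁ hef h, assoc_perp₂ hef h, assoc_eq hef h⟩

lemma swap3 {a b c : E} (hbc : perp b c) (h : perp a (op b c)) :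
    perp a c ∧ perp b (op a c) ∧ op a (op b c) = op b (op a c) := by
  have hab := assoc_perp₁ hbc h
  have h2 := assoc_perp₂ hbc h
  have h3 := assoc_eq hbc h
  have h2' : perp (op b a) c := by rwa [op_comm hab] at h2
  have hs := shift (perp_comm hab) h2'
  exact ⟨hs.1, hs.2.1, by rw [h3, op_comm hab, hs.2.2]⟩

lemma perp_of_le_right {a b c : E} (h : perp a b) (hc : le c b) : perp a c := by
  obtain ⟨d, hd, rfl⟩ := hc
  exact assoc_perp₁ hd h

lemma perp_of_le_left {a b c : E} (hc : le c a) (h : perp a b) : perp c b :=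
  perp_comm (perp_of_le_right (perp_comm h) hc)

lemma le_trans' {a b c : E} (h1 : le a b) (h2 : le b c) : le a c := by
  obtain ⟨x, hx, rfl⟩ := h1
  obtain ⟨y, hy, rfl⟩ := h2
  have hs := shift hx hy
  exact ⟨op x y, hs.2.1, hs.2.2.symm⟩

lemma op_cancel_zero {a x : E} (hx : perp a x) (h : op a x = a) : x = zero :=
  cancel hx (perp_zero a) (by rw [h, op_zero])

lemma le_antisymm' {a b : E} (h1 : le a b) (h2 : le b a) : a = b := by
  obtain ⟨x, hx, rfl⟩ := h1
  obtain ⟨y, hy, hba⟩ := h2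
  have hs := shift hx hy
  have h0 : op x y = zero := op_cancel_zero hs.2.1 (by rw [← hs.2.2]; exact hba)
  rw [(pos hs.1 h0).1, op_zero]

lemma le_mono_right {u r m : E} (hu : le u r) (h : perp m r) :
    perp m u ∧ le (op m u) (op m r) := by
  obtain ⟨t, ht, rfl⟩ := hu
  exact ⟨assoc_perp₁ ht h, ⟨t, assoc_perp₂ ht h, (assoc_eq ht h).symm⟩⟩

lemma le_mono_left {x m r : E} (hx : le x m) (h : perp m r) :
    perp x r ∧ le (op x r) (op m r) := by
  obtain ⟨t, ht, rfl⟩ := hx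
  have hs := shift ht h
  have h1 : perp x (op r t) := by have h0 := hs.2.1; rwa [op_comm hs.1] at h0
  have ha := assocd (perp_comm hs.1) h1
  refine ⟨ha.1, ⟨t, ha.2.1, ?_⟩⟩
  rw [← ha.2.2, ← op_comm hs.1, ← hs.2.2]

lemma le_mono {x u m r : E} (hx : le x m) (hu : le u r) (h : perp m r) :
    perp x u ∧ le (op x u) (op m r) := by
  have h1 := le_mono_left hx h
  have h2 := le_mono_right hu h1.1
  exact ⟨h2.1, le_trans' h2.2 h1.2⟩

lemma le_op_right {a d : E} (h : perp a d) : le a (op a d) := ⟨d, h, rfl⟩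

lemma le_op_left {a d : E} (h : perp a d) : le d (op a d) :=
  ⟨a, perp_comm h, op_comm (perp_comm h)⟩

lemma le_sub {u x M w : E} (hux : perp u x) (h : le (op u x) M) (hw : perp u w)
    (hMw : op u w = M) : le x w := by
  obtain ⟨t, ht, hM⟩ := h
  have hs := shift hux ht
  have heq : op u w = op u (op x t) := by rw [hMw, ← hM, hs.2.2]
  exact ⟨t, hs.1, (cancel hw hs.2.1 heq).symm⟩

end Basic

section FinSumLemmas

lemma finSum_congr {I : Type} {e : I → E} {s t : Finset I} {x : E} (h : s = t)
    (hf : FinSum e s x) : FinSum e t x := h ▸ hf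

lemma finSum_val {I : Type} {e : I → E} {s : Finset I} {x y : E} (h : x = y)
    (hf : FinSum e s x) : FinSum e s y := h ▸ hf

lemma finSum_eq_empty {I : Type} {e : I → E} {s : Finset I} {x : E}
    (h : FinSum e s x) (hs : s = ∅) : x = zero := by
  induction h with
  | empty => rfl
  | cons hj hf hp ih => exact absurd hs (Finset.cons_ne_empty _)

lemma finSum_empty' {I : Type} {e : I → E} {x : E} (h : FinSum e ∅ x) : x = zero :=
  finSum_eq_empty h rfl

lemma finSum_erase {I : Type} [DecidableEq I] {e : I → E} {s : Finset I} {x : E}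
    (h : FinSum e s x) :
    ∀ i ∈ s, ∃ y, FinSum e (s.erase i) y ∧ perp (e i) y ∧ op (e i) y = x := by
  induction h with
  | empty => intro i hi; exact absurd hi (Finset.notMem_empty i)
  | @cons s j x₀ hj hf hp ih =>
    intro i hi
    rcases Finset.mem_cons.mp hi with heq | hit
    · subst heq
      refine ⟨x₀, ?_, hp, rfl⟩
      have hc : (Finset.cons i s hj).erase i = s := by
        rw [Finset.cons_eq_insert, Finset.erase_insert hj]
      exact finSum_congr hc.symm hf
    · obtain ⟨y, hy, hpy, hopy⟩ := ih i hit
      have hne : j ≠ i := by rintro rfl; exact hj hit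
      have hjx : perp (e j) (op (e i) y) := by rw [hopy]; exact hp
      have hs := swap3 hpy hjx
      have hjy : j ∉ s.erase i := fun hmem => hj (Finset.mem_of_mem_erase hmem)
      refine ⟨op (e j) y, ?_, hs.2.1, ?_⟩
      · have hfs : FinSum e (Finset.cons j (s.erase i) hjy) (op (e j) y) :=
          FinSum.cons hjy hy hs.1
        have hceq : Finset.cons j (s.erase i) hjy = (Finset.cons j s hj).erase i := by
          rw [Finset.cons_eq_insert, Finset.cons_eq_insert,
            Finset.erase_insert_of_ne hne]
        exact finSum_congr hceq hfs
      · rw [← hs.2.2, hopy]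

lemma finSum_unique {I : Type} {e : I → E} {s : Finset I} {x y : E}
    (hx : FinSum e s x) (hy : FinSum e s y) : x = y := by
  classical
  induction hx generalizing y with
  | empty => exact (finSum_empty' hy).symm
  | @cons s j x₀ hj hf hp ih =>
    obtain ⟨y₀, hy₀, hpy, hopy⟩ := finSum_erase hy j (by simp)
    have hc : (Finset.cons j s hj).erase j = s := by
      rw [Finset.cons_eq_insert, Finset.erase_insert hj]
    rw [← hopy, ih (finSum_congr hc hy₀)]

lemma finSum_subset {I : Type} [DecidableEq I] {e : I → E} {s : Finset I} {x : E}
    (h : FinSum e s x) : ∀ t ⊆ s, ∃ y, FinSum e t y ∧ le y x := by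
  induction h with
  | empty =>
    intro t ht
    rw [Finset.subset_empty] at ht
    subst ht
    exact ⟨zero, FinSum.empty, le_refl' zero⟩
  | @cons s j x₀ hj hf hp ih =>
    intro t ht
    by_cases hjt : j ∈ t
    · have hsub : t.erase j ⊆ s := by
        intro a ha
        rcases Finset.mem_cons.mp (ht (Finset.mem_of_mem_erase ha)) with heq | h'
        · exact absurd (heq ▸ ha) (Finset.notMem_erase j t)
        · exact h'
      obtain ⟨y₀, hy₀, hle⟩ := ih _ hsub
      have hm := le_mono_right hle hp
      refine ⟨op (e j) y₀, ?_, hm.2⟩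
      have hfs : FinSum e (Finset.cons j (t.erase j) (Finset.notMem_erase j t))
          (op (e j) y₀) := FinSum.cons _ hy₀ hm.1
      exact finSum_congr (by rw [Finset.cons_eq_insert, Finset.insert_erase hjt]) hfs
    · have hsub : t ⊆ s := by
        intro a ha
        rcases Finset.mem_cons.mp (ht ha) with heq | h'
        · exact absurd (heq ▸ ha) hjt
        · exact h'
      obtain ⟨y, hy, hle⟩ := ih _ hsub
      exact ⟨y, hy, le_trans' hle (le_op_left hp)⟩

lemma finSum_dominated {I : Type} {u w : I → E} (huw : ∀ i, le (u i) (w i))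
    {s : Finset I} {x : E} (h : FinSum w s x) : ∃ y, FinSum u s y ∧ le y x := by
  induction h with
  | empty => exact ⟨zero, FinSum.empty, le_refl' zero⟩
  | @cons s j x₀ hj hf hp ih =>
    obtain ⟨y₀, hy₀, hle⟩ := ih
    have hm := le_mono (huw j) hle hp
    exact ⟨op (u j) y₀, FinSum.cons hj hy₀ hm.1, hm.2⟩

lemma finSum_map_mp {I J : Type} (j : J ↪ I) {e : I → E} {s : Finset J} {x : E}
    (h : FinSum (fun a => e (j a)) s x) : FinSum e (s.map j) x := by
  induction h with
  | empty => exact finSum_congr (Finset.map_empty j).symm FinSum.empty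
  | @cons s a x₀ ha hf hp ih =>
    have hja : j a ∉ s.map j := by
      simp only [Finset.mem_map, not_exists]
      rintro b ⟨hb, hEq⟩
      exact ha (j.injective hEq ▸ hb)
    have hfs := FinSum.cons hja ih hp
    exact finSum_congr (Finset.map_cons j a s ha).symm hfs

lemma finSum_map_mpr {I J : Type} [DecidableEq I] (j : J ↪ I) {e : I → E}
    (s : Finset J) : ∀ {x : E}, FinSum e (s.map j) x → FinSum (fun a => e (j a)) s x := by
  classical
  induction s using Finset.cons_induction with
  | empty =>
    intro x h
    rw [Finset.map_empty] at h
    exact finSum_val (finSum_empty' h).symm FinSum.empty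
  | cons a s ha ih =>
    intro x h
    have hmem : j a ∈ (Finset.cons a s ha).map j := by simp
    obtain ⟨y, hy, hpy, hopy⟩ := finSum_erase h (j a) hmem
    have hja : j a ∉ s.map j := by
      simp only [Finset.mem_map, not_exists]
      rintro b ⟨hb, hEq⟩
      exact ha (j.injective hEq ▸ hb)
    have herase : ((Finset.cons a s ha).map j).erase (j a) = s.map j := by
      rw [Finset.map_cons, Finset.cons_eq_insert, Finset.erase_insert hja]
    have hy' := ih (finSum_congr herase hy)
    exact finSum_val hopy (FinSum.cons ha hy' hpy)

lemma finSum_singleton {I : Type} (e : I → E) (i : I) : FinSum e {i} (e i) := by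
  classical
  have h0 : FinSum e ∅ zero := FinSum.empty
  have h1 := FinSum.cons (Finset.notMem_empty i) h0 (perp_zero (e i))
  have hc : Finset.cons i ∅ (Finset.notMem_empty i) = {i} := by
    rw [Finset.cons_eq_insert]; rfl
  exact finSum_congr hc (finSum_val (op_zero (e i)) h1)

end FinSumLemmas

section Orthosum

/-- Orthogonal family, with all finite partial sums bounded by `F`. -/
def Bnd {I : Type} (e : I → E) (F : E) : Prop :=
  (∀ s : Finset I, ∃ x, FinSum e s x) ∧
  (∀ (s : Finset I) (x : E), FinSum e s x → le x F)

lemma Bnd.map {I J : Type} [DecidableEq I] {e : I → E} {F : E} (h : Bnd e F)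
    (j : J ↪ I) : Bnd (fun a => e (j a)) F := by
  constructor
  · intro s
    obtain ⟨x, hx⟩ := h.1 (s.map j)
    exact ⟨x, finSum_map_mpr j s hx⟩
  · intro s x hx
    exact h.2 _ _ (finSum_map_mp j hx)

lemma Bnd.dominated {I : Type} {u w : I → E} (huw : ∀ i, le (u i) (w i)) {F : E}
    (h : Bnd w F) : Bnd u F := by
  constructor
  · intro s
    obtain ⟨x, hx⟩ := h.1 s
    obtain ⟨y, hy, _⟩ := finSum_dominated huw hx
    exact ⟨y, hy⟩
  · intro s y hy
    obtain ⟨x, hx⟩ := h.1 s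
    obtain ⟨y', hy', hle⟩ := finSum_dominated huw hx
    rw [finSum_unique hy hy']
    exact le_trans' hle (h.2 _ _ hx)

lemma Bnd.orthosum {u : ℕ → E} {F : E} (hD : DedekindOC E) (h : Bnd u F) :
    ∃ m, IsOrthosum u m ∧ le m F := by
  obtain ⟨m, hm⟩ := hD ℕ u h.1 ⟨F, h.2⟩
  exact ⟨m, hm, hm.2.2 F h.2⟩

lemma isOrthosum_unique {I : Type} {e : I → E} {m m' : E}
    (h : IsOrthosum e m) (h' : IsOrthosum e m') : m = m' :=
  le_antisymm' (h.2.2 m' h'.2.1) (h'.2.2 m h.2.1)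

def succEmb : ℕ ↪ ℕ := ⟨Nat.succ, Nat.succ_injective⟩

@[simp] lemma succEmb_apply (n : ℕ) : succEmb n = n + 1 := rfl

lemma map_pred_image {s : Finset ℕ} (hs : 0 ∉ s) :
    (s.image (fun n => n - 1)).map succEmb = s := by
  ext n
  simp only [Finset.mem_map, Finset.mem_image, succEmb_apply]
  constructor
  · rintro ⟨m, ⟨k, hk, rfl⟩, rfl⟩
    have hk0 : k ≠ 0 := fun h => hs (h ▸ hk)
    have he : k - 1 + 1 = k := by omega
    rwa [he]
  · intro hn
    have hn0 : n ≠ 0 := fun h => hs (h ▸ hn)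
    exact ⟨n - 1, ⟨n, hn, rfl⟩, by omega⟩

/-- tail of a sequence -/
def tl (u : ℕ → E) : ℕ → E := fun k => u (k + 1)

lemma extract (hD : DedekindOC E) {u : ℕ → E} {M : E} (hM : IsOrthosum u M) :
    ∃ M', IsOrthosum (tl u) M' ∧ perp (u 0) M' ∧ op (u 0) M' = M := by
  classical
  obtain ⟨horth, hbd, hmin⟩ := hM
  have h0 : le (u 0) M := hbd {0} (u 0) (finSum_singleton u 0)
  have hBnd : Bnd u M := ⟨horth, hbd⟩
  have hBndT : Bnd (tl u) M := hBnd.map succEmb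
  have hkey : ∀ (s : Finset ℕ) (x' : E), FinSum (tl u) s x' →
      perp (u 0) x' ∧ ∀ b : E, (∀ (t : Finset ℕ) (z : E), FinSum u t z → le z b) →
        le (op (u 0) x') b := by
    intro s x' hx'
    have hx'' : FinSum u (s.map succEmb) x' := finSum_map_mp succEmb hx'
    have h0s : 0 ∉ s.map succEmb := by
      simp only [Finset.mem_map, succEmb_apply, not_exists]
      rintro b ⟨_, hEq⟩
      omega
    obtain ⟨z, hz⟩ := horth (Finset.cons 0 (s.map succEmb) h0s)
    obtain ⟨y, hy, hpy, hopy⟩ := finSum_erase hz 0 (by simp)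
    have herase : (Finset.cons 0 (s.map succEmb) h0s).erase 0 = s.map succEmb := by
      rw [Finset.cons_eq_insert, Finset.erase_insert h0s]
    have hyx : y = x' := finSum_unique (finSum_congr herase hy) hx''
    subst hyx
    refine ⟨hpy, fun b hb => ?_⟩
    rw [hopy]
    exact hb _ _ hz
  obtain ⟨M', hM', hM'M⟩ := hBndT.orthosum hD
  obtain ⟨w, hw, hwM⟩ := h0
  have hM'w : le M' w := hM'.2.2 w (fun s x' hx' => by
    obtain ⟨hp, hbl⟩ := hkey s x' hx'
    exact le_sub hp (hbl M hbd) hw hwM)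
  have hpM' : perp (u 0) M' := perp_of_le_right hw hM'w
  have hiso : IsOrthosum u (op (u 0) M') := by
    refine ⟨horth, ?_, ?_⟩
    · intro s x hx
      by_cases h0s : 0 ∈ s
      · obtain ⟨y, hy, hpy, hopy⟩ := finSum_erase hx 0 h0s
        have h0e : 0 ∉ s.erase 0 := Finset.notMem_erase 0 s
        have hty : FinSum (tl u) ((s.erase 0).image (fun n => n - 1)) y :=
          finSum_map_mpr succEmb _ (finSum_congr (map_pred_image h0e).symm hy)
        have hyM' : le y M' := hM'.2.1 _ _ hty
        rw [← hopy]
        exact (le_mono_right hyM' hpM').2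
      · have htx : FinSum (tl u) (s.image (fun n => n - 1)) x :=
          finSum_map_mpr succEmb _ (finSum_congr (map_pred_image h0s).symm hx)
        exact le_trans' (hM'.2.1 _ _ htx) (le_op_left hpM')
    · intro b hb
      have h0b : le (u 0) b := hb {0} (u 0) (finSum_singleton u 0)
      obtain ⟨wb, hwb, hwbb⟩ := h0b
      have hMwb : le M' wb := hM'.2.2 wb (fun s x' hx' => by
        obtain ⟨hp, hbl⟩ := hkey s x' hx'
        exact le_sub hp (hbl b hb) hwb hwbb)
      have hfin := (le_mono_right hMwb hwb).2
      rwa [hwbb] at hfin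
  exact ⟨M', hM', hpM', isOrthosum_unique hiso ⟨horth, hbd, hmin⟩⟩

end Orthosum

section PairAdd

def pairFam (a b : E) : Bool → E := fun i => bif i then a else b

lemma pair_orthosum {a b : E} (hab : perp a b) : IsOrthosum (pairFam a b) (op a b) := by
  classical
  have hne : (false : Bool) ∉ (∅ : Finset Bool) := Finset.notMem_empty _
  have h1 : FinSum (pairFam a b) (Finset.cons false ∅ hne) b :=
    finSum_val (op_zero b) (FinSum.cons hne FinSum.empty (perp_zero b))
  have hmemt : (true : Bool) ∉ Finset.cons false ∅ hne := by simp
  have h2 : FinSum (pairFam a b) (Finset.cons true _ hmemt) (op a b) :=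
    FinSum.cons hmemt h1 hab
  have hsub : ∀ s : Finset Bool, s ⊆ Finset.cons true _ hmemt := by
    intro s x hx
    cases x <;> simp
  refine ⟨?_, ?_, ?_⟩
  · intro s
    obtain ⟨y, hy, _⟩ := finSum_subset h2 s (hsub s)
    exact ⟨y, hy⟩
  · intro s x hx
    obtain ⟨y, hy, hle⟩ := finSum_subset h2 s (hsub s)
    rwa [finSum_unique hx hy]
  · intro c hc
    exact hc _ _ h2

lemma sim_add {sim : E → E → Prop} (hsk : SKCong E sim) {a b a' b' : E}
    (ha : sim a a') (hb : sim b b') (hab : perp a b) (hab' : perp a' b') :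
    sim (op a b) (op a' b') :=
  hsk.sk2 (pairFam a b) (pairFam a' b') _ _ (pair_orthosum hab) (pair_orthosum hab')
    (fun i => by cases i with
      | false => exact hb
      | true => exact ha)

end PairAdd

section FiniteDcl

lemma finite_dcl {sim : E → E → Prop} (hsk : SKCong E sim) {e f : E}
    (hf : Finite' sim f) (hef : le e f) : Finite' sim e := by
  obtain ⟨c, hc, hce⟩ := hef
  intro d hde hsim
  obtain ⟨x, hx, hxe⟩ := hde
  have hc' : perp (op d x) c := by rw [hxe]; exact hc
  have hs := shift hx hc'
  have h1 : perp d (op c x) := by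
    have h0 := hs.2.1
    rwa [op_comm hs.1] at h0
  have ha := assocd (perp_comm hs.1) h1
  have hec : perp e c := by rw [← hxe]; exact hc'
  have hsim2 : sim (op d c) f := by
    have h2 : sim (op d c) (op e c) := sim_add hsk hsim (hsk.refl c) ha.1 hec
    rwa [hce] at h2
  have hfx : op (op d c) x = f := by
    rw [← ha.2.2, ← op_comm hs.1, ← hs.2.2, hxe, hce]
  have hlef : le (op d c) f := ⟨x, ha.2.1, hfx⟩
  have hdcf : op d c = f := hf (op d c) hlef hsim2
  have hx0 : x = zero := cancel ha.2.1 (perp_zero _) (by rw [hfx, op_zero, hdcf])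
  rw [← hxe, hx0, op_zero]

end FiniteDcl

section Sequences

lemma seq_rec {α : Type u} {R : α → α → Prop} (h : ∀ a, ∃ b, R a b) (a0 : α) :
    ∃ f : ℕ → α, f 0 = a0 ∧ ∀ n, R (f n) (f (n + 1)) := by
  classical
  choose g hg using h
  exact ⟨fun n => Nat.rec a0 (fun _ ih => g ih) n, rfl, fun n => hg _⟩

lemma step_lemma {sim : E → E → Prop} (hsk : SKCong E sim) {A B C : E}
    (hAB : perp A B) (hAC : perp A C) (h : sim (op A B) (op A C)) :
    ∃ A' B' C' S : E, (perp A' B' ∧ op A' B' = A) ∧ (perp C' S ∧ op C' S = B) ∧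
      (perp A' C' ∧ sim A (op A' C')) ∧ (perp B' S ∧ sim C (op B' S)) := by
  obtain ⟨A₂, C₂, hpc, heq, hsa, hsc⟩ := hsk.sk3d hAC h
  obtain ⟨e₁, e₂, f₁, f₂, h12, hA, hff, hB, h13, hs1, h24, hs2⟩ :=
    hsk.sk3e hAB hpc heq.symm
  exact ⟨e₁, e₂, f₁, f₂, ⟨h12, hA⟩, ⟨hff, hB⟩,
    ⟨h13, hsk.trans (hsk.symm hsa) hs1⟩, ⟨h24, hsk.trans (hsk.symm hsc) hs2⟩⟩

lemma seq_exists {sim : E → E → Prop} (hsk : SKCong E sim) {A B C : E}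
    (hAB : perp A B) (hAC : perp A C) (h : sim (op A B) (op A C)) :
    ∃ Af Bf Cf Sf : ℕ → E, Af 0 = A ∧ Bf 0 = B ∧ Cf 0 = C ∧ ∀ n,
      (perp (Af (n+1)) (Bf (n+1)) ∧ op (Af (n+1)) (Bf (n+1)) = Af n) ∧
      (perp (Cf (n+1)) (Sf n) ∧ op (Cf (n+1)) (Sf n) = Bf n) ∧
      (perp (Af (n+1)) (Cf (n+1)) ∧ sim (Af n) (op (Af (n+1)) (Cf (n+1)))) ∧
      (perp (Bf (n+1)) (Sf n) ∧ sim (Cf n) (op (Bf (n+1)) (Sf n))) := by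
  classical
  -- state: (A, B, C); invariant Inv; R carries the links (with S existential)
  let Inv : E × E × E → Prop := fun t =>
    perp t.1 t.2.1 ∧ perp t.1 t.2.2 ∧ sim (op t.1 t.2.1) (op t.1 t.2.2)
  let L : E × E × E → E × E × E → E → Prop := fun a b S =>
    (perp b.1 b.2.1 ∧ op b.1 b.2.1 = a.1) ∧
    (perp b.2.2 S ∧ op b.2.2 S = a.2.1) ∧
    (perp b.1 b.2.2 ∧ sim a.1 (op b.1 b.2.2)) ∧
    (perp b.2.1 S ∧ sim a.2.2 (op b.2.1 S))
  have hstep : ∀ a : E × E × E, ∃ b : E × E × E, Inv a → Inv b ∧ ∃ S, L a b S := by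
    intro a
    by_cases ha : Inv a
    · obtain ⟨A', B', C', S, l1, l2, l3, l4⟩ := step_lemma hsk ha.1 ha.2.1 ha.2.2
      refine ⟨(A', B', C'), fun _ => ⟨⟨l1.1, l3.1, ?_⟩, S, l1, l2, l3, l4⟩⟩
      show sim (op A' B') (op A' C')
      rw [l1.2]
      exact l3.2
    · exact ⟨a, fun h' => absurd h' ha⟩
  obtain ⟨f, hf0, hfc⟩ := seq_rec hstep (A, B, C)
  have hinv : ∀ n, Inv (f n) := by
    intro n
    induction n with
    | zero => rw [hf0]; exact ⟨hAB, hAC, h⟩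
    | succ n ih => exact (hfc n ih).1
  have hL : ∀ n, ∃ S, L (f n) (f (n+1)) S := fun n => (hfc n (hinv n)).2
  choose Sf hSf using hL
  refine ⟨fun n => (f n).1, fun n => (f n).2.1, fun n => (f n).2.2, Sf,
    show (f 0).1 = A by rw [hf0], show (f 0).2.1 = B by rw [hf0],
    show (f 0).2.2 = C by rw [hf0], fun n => ?_⟩
  exact ⟨(hSf n).1, (hSf n).2.1, (hSf n).2.2.1, (hSf n).2.2.2⟩

lemma pull {sim : E → E → Prop} (hsk : SKCong E sim) (D S : ℕ → E)
    (hch : ∀ n, perp (D (n+1)) (S n) ∧ sim (D n) (op (D (n+1)) (S n))) :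
    ∃ x σ : ℕ → E, x 0 = D 0 ∧ ∀ n, perp (x (n+1)) (σ n) ∧ op (x (n+1)) (σ n) = x n ∧
      sim (x n) (D n) ∧ sim (σ n) (S n) := by
  classical
  have hstep : ∀ a : ℕ × E × E, ∃ b : ℕ × E × E,
      sim a.2.1 (D a.1) → b.1 = a.1 + 1 ∧ sim b.2.1 (D (a.1+1)) ∧ perp b.2.1 b.2.2 ∧
        op b.2.1 b.2.2 = a.2.1 ∧ sim b.2.2 (S a.1) := by
    intro a
    by_cases ha : sim a.2.1 (D a.1)
    · have h1 : sim a.2.1 (op (D (a.1+1)) (S a.1)) := hsk.trans ha (hch a.1).2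
      obtain ⟨uu, vv, hp, hop, hu, hv⟩ := hsk.sk3d (hch a.1).1 h1
      exact ⟨(a.1+1, uu, vv), fun _ => ⟨rfl, hu, hp, hop, hv⟩⟩
    · exact ⟨a, fun h' => absurd h' ha⟩
  obtain ⟨f, hf0, hfc⟩ := seq_rec hstep (0, D 0, zero)
  have hinv : ∀ n, (f n).1 = n ∧ sim (f n).2.1 (D n) := by
    intro n
    induction n with
    | zero => rw [hf0]; exact ⟨rfl, hsk.refl (D 0)⟩
    | succ n ih =>
      have hsim : sim (f n).2.1 (D (f n).1) := by rw [ih.1]; exact ih.2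
      obtain ⟨h1, h2, _, _, _⟩ := hfc n hsim
      rw [ih.1] at h1 h2
      exact ⟨h1, h2⟩
  refine ⟨fun n => (f n).2.1, fun n => (f (n+1)).2.2,
    show (f 0).2.1 = D 0 by rw [hf0], fun n => ?_⟩
  have hsim : sim (f n).2.1 (D (f n).1) := by rw [(hinv n).1]; exact (hinv n).2
  obtain ⟨h1, h2, h3, h4, h5⟩ := hfc n hsim
  rw [(hinv n).1] at h5
  exact ⟨h3, h4, (hinv n).2, h5⟩

end Sequences

section Tower

lemma tower_partial {x σ : ℕ → E}
    (ht : ∀ n, perp (x (n+1)) (σ n) ∧ op (x (n+1)) (σ n) = x n) :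
    ∀ n, ∃ p, FinSum σ (Finset.range n) p ∧ perp (x n) p ∧ op (x n) p = x 0 := by
  intro n
  induction n with
  | zero =>
    exact ⟨zero, finSum_congr Finset.range_zero.symm FinSum.empty, perp_zero _, op_zero _⟩
  | succ n ih =>
    obtain ⟨p, hp, hperp, heq⟩ := ih
    have h1 : perp (op (x (n+1)) (σ n)) p := by rw [(ht n).2]; exact hperp
    have hs := shift (ht n).1 h1
    refine ⟨op (σ n) p, ?_, hs.2.1, ?_⟩
    · have hnm : n ∉ Finset.range n := by simp
      have hfs := FinSum.cons hnm hp hs.1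
      exact finSum_congr (by rw [Finset.cons_eq_insert, Finset.range_add_one]) hfs
    · rw [← hs.2.2, (ht n).2, heq]

lemma tower_bnd {x σ : ℕ → E}
    (ht : ∀ n, perp (x (n+1)) (σ n) ∧ op (x (n+1)) (σ n) = x n) :
    Bnd σ (x 0) := by
  classical
  constructor
  · intro s
    obtain ⟨N, hN⟩ := s.exists_nat_subset_range
    obtain ⟨p, hp, _, _⟩ := tower_partial ht N
    obtain ⟨y, hy, _⟩ := finSum_subset hp s hN
    exact ⟨y, hy⟩
  · intro s z hz
    obtain ⟨N, hN⟩ := s.exists_nat_subset_range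
    obtain ⟨p, hp, hperp, heq⟩ := tower_partial ht N
    obtain ⟨y, hy, hle⟩ := finSum_subset hp s hN
    rw [finSum_unique hz hy]
    refine le_trans' hle ⟨x N, perp_comm hperp, ?_⟩
    rw [op_comm (perp_comm hperp), heq]

lemma tower_rho (hD : DedekindOC E) {x σ : ℕ → E}
    (ht : ∀ n, perp (x (n+1)) (σ n) ∧ op (x (n+1)) (σ n) = x n) :
    ∃ τ ρ, IsOrthosum σ τ ∧ perp τ ρ ∧ op τ ρ = x 0 ∧ ∀ n, le ρ (x n) := by
  obtain ⟨τ, hτ, hτle⟩ := (tower_bnd ht).orthosum hD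
  obtain ⟨ρ, hρ, hρeq⟩ := hτle
  refine ⟨τ, ρ, hτ, hρ, hρeq, fun n => ?_⟩
  obtain ⟨p, hp, hperp, heq⟩ := tower_partial ht n
  obtain ⟨q, hq, hqτ⟩ := hτ.2.1 _ _ hp
  have h1 : perp (op p q) ρ := by rw [hqτ]; exact hρ
  have hs := shift hq h1
  have h2 : op p (op q ρ) = op p (x n) := by
    rw [← hs.2.2, hqτ, hρeq, ← heq, op_comm hperp]
  have h3 : op q ρ = x n := cancel hs.2.1 (perp_comm hperp) h2
  exact ⟨q, perp_comm hs.1, by rw [op_comm (perp_comm hs.1), h3]⟩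

end Tower

section Absorb

lemma absorb {sim : E → E → Prop} (hsk : SKCong E sim) (hD : DedekindOC E)
    {W : ℕ → E} {F ρ : E} (hb : Bnd W F) (hF : Finite' sim F)
    (h : ∀ k, ∃ v, le v (W k) ∧ sim v ρ) : ρ = zero := by
  classical
  choose v hv1 hv2 using h
  have hbv : Bnd v F := hb.dominated hv1
  obtain ⟨M, hM, hMF⟩ := hbv.orthosum hD
  obtain ⟨M', hM', hpM', hopM'⟩ := extract hD hM
  have hsim : sim M M' := hsk.sk2 v (tl v) M M' hM hM'
    (fun k => hsk.trans (hv2 k) (hsk.symm (hv2 (k+1))))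
  have hfin : Finite' sim M := finite_dcl hsk hF hMF
  have hle : le M' M :=
    ⟨v 0, perp_comm hpM', by rw [op_comm (perp_comm hpM'), hopM']⟩
  have hMM' : M' = M := hfin M' hle (hsk.symm hsim)
  have h1 : op M' (v 0) = M' := by
    rw [op_comm (perp_comm hpM'), hopM', ← hMM']
  have hv0 : v 0 = zero :=
    cancel (perp_comm hpM') (perp_zero M') (by rw [h1, op_zero])
  have hz : sim zero ρ := hv0 ▸ hv2 0
  exact hsk.sk1 (hsk.symm hz)

end Absorb

section Key

/-- Cancellation for `∼` below a finite element:
if `A` is finite, `A ⊕ B ∼ A ⊕ C`, then `B ∼ C`. -/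
lemma key {sim : E → E → Prop} (hsk : SKCong E sim) (hD : DedekindOC E)
    {A B C : E} (hA : Finite' sim A) (hAB : perp A B) (hAC : perp A C)
    (h : sim (op A B) (op A C)) : sim B C := by
  classical
  obtain ⟨Af, Bf, Cf, Sf, hA0, hB0, hC0, hprop⟩ := seq_exists hsk hAB hAC h
  -- tower inside A : A = Af (n+1) ⊕ Bf (n+1) ⊕ ... ⊕ Bf 1
  have htA : ∀ n, perp (Af (n+1)) ((fun m => Bf (m+1)) n) ∧
      op (Af (n+1)) ((fun m => Bf (m+1)) n) = Af n := fun n => (hprop n).1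
  have hbndB : Bnd (fun m => Bf (m+1)) (Af 0) := tower_bnd htA
  have hfinA0 : Finite' sim (Af 0) := by rw [hA0]; exact hA
  -- generic alternating chain
  have hDBchain : ∀ DB : ℕ → E, (∀ m, m % 2 = 0 → DB m = Bf m) →
      (∀ m, m % 2 = 1 → DB m = Cf m) →
      ∀ n, perp (DB (n+1)) (Sf n) ∧ sim (DB n) (op (DB (n+1)) (Sf n)) := by
    intro DB hE hO n
    rcases Nat.even_or_odd n with he | ho
    · have h2 : n % 2 = 0 := Nat.even_iff.mp he
      have h3 : (n+1) % 2 = 1 := by omega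
      rw [hE n h2, hO (n+1) h3]
      exact ⟨(hprop n).2.1.1, by rw [(hprop n).2.1.2]; exact hsk.refl _⟩
    · have h2 : n % 2 = 1 := Nat.odd_iff.mp ho
      have h3 : (n+1) % 2 = 0 := by omega
      rw [hO n h2, hE (n+1) h3]
      exact ⟨(hprop n).2.2.2.1, (hprop n).2.2.2.2⟩
  have hDCchain : ∀ DC : ℕ → E, (∀ m, m % 2 = 0 → DC m = Cf m) →
      (∀ m, m % 2 = 1 → DC m = Bf m) →
      ∀ n, perp (DC (n+1)) (Sf n) ∧ sim (DC n) (op (DC (n+1)) (Sf n)) := by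
    intro DC hE hO n
    rcases Nat.even_or_odd n with he | ho
    · have h2 : n % 2 = 0 := Nat.even_iff.mp he
      have h3 : (n+1) % 2 = 1 := by omega
      rw [hE n h2, hO (n+1) h3]
      exact ⟨(hprop n).2.2.2.1, (hprop n).2.2.2.2⟩
    · have h2 : n % 2 = 1 := Nat.odd_iff.mp ho
      have h3 : (n+1) % 2 = 0 := by omega
      rw [hO n h2, hE (n+1) h3]
      exact ⟨(hprop n).2.1.1, by rw [(hprop n).2.1.2]; exact hsk.refl _⟩
  -- B-side pull
  obtain ⟨xB, σB, hxB0, hxB⟩ := pull hsk (fun m => if m % 2 = 0 then Bf m else Cf m) Sf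
    (hDBchain _ (fun m hm => if_pos hm) (fun m hm => if_neg (by omega)))
  obtain ⟨xC, σC, hxC0, hxC⟩ := pull hsk (fun m => if m % 2 = 0 then Cf m else Bf m) Sf
    (hDCchain _ (fun m hm => if_pos hm) (fun m hm => if_neg (by omega)))
  have htB : ∀ n, perp (xB (n+1)) (σB n) ∧ op (xB (n+1)) (σB n) = xB n :=
    fun n => ⟨(hxB n).1, (hxB n).2.1⟩
  have htC : ∀ n, perp (xC (n+1)) (σC n) ∧ op (xC (n+1)) (σC n) = xC n :=
    fun n => ⟨(hxC n).1, (hxC n).2.1⟩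
  obtain ⟨τB, ρB, hτB, hpρB, hopρB, hρBle⟩ := tower_rho hD htB
  obtain ⟨τC, ρC, hτC, hpρC, hopρC, hρCle⟩ := tower_rho hD htC
  -- kill ρB using the even B-pieces inside A
  have hbndWB : Bnd (fun k => Bf (2*k+1+1)) (Af 0) :=
    hbndB.map ⟨fun k => 2*k+1, fun a b hab => by simp only [] at hab; omega⟩
  have hpieceB : ∀ k, ∃ v, le v (Bf (2*k+1+1)) ∧ sim v ρB := by
    intro k
    have hm : (2*k+1+1) % 2 = 0 := by omega
    have hsimx : sim (xB (2*k+1+1)) (Bf (2*k+1+1)) := by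
      have h0 := (hxB (2*k+1+1)).2.2.1
      rwa [if_pos hm] at h0
    obtain ⟨z, hz, hzeq⟩ := hρBle (2*k+1+1)
    have hsim2 : sim (Bf (2*k+1+1)) (op ρB z) := by
      rw [hzeq]; exact hsk.symm hsimx
    obtain ⟨vv, ww, hvw, hvweq, hv, _⟩ := hsk.sk3d hz hsim2
    exact ⟨vv, ⟨ww, hvw, hvweq⟩, hv⟩
  have hρB0 : ρB = zero := absorb hsk hD hbndWB hfinA0 hpieceB
  -- kill ρC using the odd B-pieces inside A
  have hbndWC : Bnd (fun k => Bf (2*k+1)) (Af 0) :=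
    hbndB.map ⟨fun k => 2*k, fun a b hab => by simp only [] at hab; omega⟩
  have hpieceC : ∀ k, ∃ v, le v (Bf (2*k+1)) ∧ sim v ρC := by
    intro k
    have hm : ¬ (2*k+1) % 2 = 0 := by omega
    have hsimx : sim (xC (2*k+1)) (Bf (2*k+1)) := by
      have h0 := (hxC (2*k+1)).2.2.1
      rwa [if_neg hm] at h0
    obtain ⟨z, hz, hzeq⟩ := hρCle (2*k+1)
    have hsim2 : sim (Bf (2*k+1)) (op ρC z) := by
      rw [hzeq]; exact hsk.symm hsimx
    obtain ⟨vv, ww, hvw, hvweq, hv, _⟩ := hsk.sk3d hz hsim2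
    exact ⟨vv, ⟨ww, hvw, hvweq⟩, hv⟩
  have hρC0 : ρC = zero := absorb hsk hD hbndWC hfinA0 hpieceC
  -- B = τB, C = τC
  have hxB0' : xB 0 = Bf 0 := by rw [hxB0]; norm_num
  have hxC0' : xC 0 = Cf 0 := by rw [hxC0]; norm_num
  have hBeq : B = τB := by
    rw [← hB0, ← hxB0', ← hopρB, hρB0, op_zero]
  have hCeq : C = τC := by
    rw [← hC0, ← hxC0', ← hopρC, hρC0, op_zero]
  have hfinal : sim τB τC := hsk.sk2 σB σC τB τC hτB hτC
    (fun k => hsk.trans (hxB k).2.2.2 (hsk.symm (hxC k).2.2.2))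
  rw [hBeq, hCeq]
  exact hfinal

lemma sub0 {sim : E → E → Prop} (hsk : SKCong E sim) (hD : DedekindOC E)
    {e e₁ e₂ g₁ g₂ : E} (hfe : Finite' sim e)
    (h12 : perp e₁ e₂) (he : op e₁ e₂ = e) (hg : perp g₁ g₂) (hge : op g₁ g₂ = e)
    (h11 : sim e₁ g₁) : sim e₂ g₂ := by
  obtain ⟨a, b, c, d, hab, habe, hcd, hcde, hac, hg1, hbd, hg2⟩ :=
    hsk.sk3e h12 hg (he.trans hge.symm)
  have hfa : Finite' sim a :=
    finite_dcl hsk (finite_dcl hsk hfe ⟨e₂, h12, he⟩) ⟨b, hab, habe⟩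
  have hsim : sim (op a b) (op a c) := by
    rw [habe]
    exact hsk.trans h11 hg1
  have hbc : sim b c := key hsk hD hfa hab hac hsim
  have h1 : sim e₂ (op b d) := by
    rw [← hcde]
    exact sim_add hsk (hsk.symm hbc) (hsk.refl d) hcd hbd
  exact hsk.trans h1 (hsk.symm hg2)

end Key

end GEA

/-- in a DGEA the finite elements form an order ideal and the
subtraction property holds. -/
theorem finite_order_ideal_and_subtraction {E : Type u} [GEA E]
    (sim : E → E → Prop) (hDER : GEA.IsDER E sim)
    (hD : GEA.DedekindOC E) (hC : GEA.CentrallyOC E) :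
    (∀ e f : E, GEA.Finite' sim f → GEA.le e f → GEA.Finite' sim e) ∧
    (∀ e f e₁ e₂ f₁ f₂ : E, GEA.Finite' sim e → GEA.Finite' sim f →
      GEA.perp e₁ e₂ → GEA.op e₁ e₂ = e → GEA.perp f₁ f₂ → GEA.op f₁ f₂ = f →
      sim e f → sim e₁ f₁ → sim e₂ f₂) := by
  obtain ⟨hsk, -⟩ := hDER
  constructor
  · exact fun e f hf hef => GEA.finite_dcl hsk hf hef
  · intro e f e₁ e₂ f₁ f₂ hfe hff h12 he hf12 hf hef h11
    have hef' : sim e (GEA.op f₁ f₂) := by rw [hf]; exact hef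
    obtain ⟨G₁, G₂, hG, hGe, hG1, hG2⟩ := hsk.sk3d hf12 hef'
    have h1G : sim e₁ G₁ := hsk.trans h11 (hsk.symm hG1)
    have h2G : sim e₂ G₂ := GEA.sub0 hsk hD hfe h12 he hG hGe h1G
    exact hsk.trans h2G hG2
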